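/- arXiv:1107.5301 — 2 statements merged into one kernel-verified Lean document; each statement's English description precedes it below -/
import Mathlib

section
/- Let d, n be positive integers and H ⊆ V(T_n) with 2^(w(H)) > Σ_{i=0}^{d−1} C(n,i). Then there exists a regular embedding of T_d into H (i.e., H contains a replica of T_d). -/
/-- Vertex set of the full binary tree `T_n` of depth `n-1`:
binary strings of length `< n`; the level of a vertex is its length. -/
def treeVerts (n : ℕ) : Set (List Bool) := {x | x.length < n}

/-- Weight of a set of vertices: `w(H) = Σ_{x ∈ H} 2^(-level x)`. -/
noncomputable def weight (H : Set (List Bool)) : ℝ :=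
  ∑' x : H, (2 : ℝ) ^ (-((x : List Bool).length : ℤ))

/-- `f` is a regular embedding of `T_d`: vertices at equal levels map to equal
levels, and the two children of each vertex map to descendants of distinct
children of the image (descendant = extension of the string). -/
def IsRegEmb (d : ℕ) (f : List Bool → List Bool) : Prop :=
  (∀ x y : List Bool, x.length < d → y.length < d → x.length = y.length →
      (f x).length = (f y).length) ∧
  (∀ x : List Bool, x.length + 1 < d → ∃ c : Bool,
      (f x ++ [c]) <+: f (x ++ [false]) ∧ (f x ++ [!c]) <+: f (x ++ [true]))

/-- `S(H)`: the set of signatures (sets of occupied levels) of all regular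
embeddings of some `T_d`, `d ≥ 0`, into `H`. -/
def sigs (H : Set (List Bool)) : Set (Set ℕ) :=
  {σ | ∃ (d : ℕ) (f : List Bool → List Bool), IsRegEmb d f ∧
      (∀ x : List Bool, x.length < d → f x ∈ H) ∧
      σ = {l : ℕ | ∃ x : List Bool, x.length < d ∧ (f x).length = l}}

/-!
Call the set of levels occupied by a replica of some `T_k` in `H` its signature. By induction
on `n`, the set `S(H)` of signatures in `H ⊆ V(T_n)` has at least `2^(w(H))` elements. Write
`H₀, H₁` for the parts of `H` below the two children of the root. Signatures of replicas in
`H₀` or `H₁` shift up by one level to signatures in `H`; if the root lies in `H`, every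
signature common to `H₀` and `H₁` also yields one through the root, so
`|S(H)| ≥ |S(H₀)| + |S(H₁)|`. Since `w(H) = [root ∈ H] + (w(H₀) + w(H₁)) / 2`, convexity of
`2^x` (AM–GM) closes the induction. A replica of `T_k` has a `k`-element signature in
`{0, …, n-1}`, so if `T_d` had no replica there would be at most `Σ_{i<d} C(n,i)` of them.
-/

open Finset

def branch (c : Bool) (H : Set (List Bool)) : Set (List Bool) := {x | c :: x ∈ H}

lemma treeVerts_finite (n : ℕ) : (treeVerts n).Finite := List.finite_length_lt Bool n

lemma branch_subset_treeVerts {n : ℕ} {H : Set (List Bool)} (hH : H ⊆ treeVerts (n + 1))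
    (c : Bool) : branch c H ⊆ treeVerts n := fun _ hx => by
  simpa [treeVerts] using hH hx

lemma weight_union {s t : Set (List Bool)} (hs : s.Finite) (ht : t.Finite) (hst : Disjoint s t) :
    weight (s ∪ t) = weight s + weight t :=
  Summable.tsum_union_disjoint (f := fun x : List Bool => (2 : ℝ) ^ (-(x.length : ℤ))) hst
    (hs.summable _) (ht.summable _)

lemma weight_image_cons (c : Bool) (s : Set (List Bool)) :
    weight (List.cons c '' s) = weight s / 2 := by
  rw [weight, tsum_image (fun x : List Bool => (2 : ℝ) ^ (-(x.length : ℤ)))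
    List.cons_injective.injOn, weight, ← tsum_div_const]
  congr 1
  ext x
  rw [List.length_cons, Nat.cast_succ, neg_add, zpow_add₀ two_ne_zero, zpow_neg_one,
    div_eq_mul_inv]

lemma eq_inter_nil_union_image_branch (H : Set (List Bool)) :
    H = H ∩ {[]} ∪ (List.cons false '' branch false H ∪ List.cons true '' branch true H) := by
  ext (_ | ⟨_ | _, _⟩) <;> simp [branch]

lemma weight_eq_inter_nil_add_branch {H : Set (List Bool)} (hH : H.Finite) :
    weight H = weight (H ∩ {[]}) + (weight (branch false H) + weight (branch true H)) / 2 := by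
  have hbranch (c : Bool) : (List.cons c '' branch c H).Finite :=
    (hH.preimage List.cons_injective.injOn).image _
  conv_lhs => rw [eq_inter_nil_union_image_branch H]
  rw [weight_union (hH.subset Set.inter_subset_left) ((hbranch false).union (hbranch true)),
    weight_union (hbranch false) (hbranch true), weight_image_cons, weight_image_cons, add_div]
  · simp [Set.disjoint_left]
  · simp +contextual [Set.disjoint_left]

lemma weight_eq_one_add_branch {H : Set (List Bool)} (hH : H.Finite) (hroot : [] ∈ H) :
    weight H = 1 + (weight (branch false H) + weight (branch true H)) / 2 := by
  rw [weight_eq_inter_nil_add_branch hH, Set.inter_singleton_of_mem hroot]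
  simp [weight]

lemma weight_eq_branch {H : Set (List Bool)} (hH : H.Finite) (hroot : [] ∉ H) :
    weight H = (weight (branch false H) + weight (branch true H)) / 2 := by
  rw [weight_eq_inter_nil_add_branch hH, Set.inter_singleton_of_notMem hroot]
  simp [weight]

lemma two_rpow_half_add_le_max (a b : ℝ) :
    (2 : ℝ) ^ ((a + b) / 2) ≤ max ((2 : ℝ) ^ a) ((2 : ℝ) ^ b) := by
  rw [← Monotone.map_max (Real.monotone_rpow_of_base_ge_one one_le_two)]
  exact Real.rpow_le_rpow_of_exponent_le one_le_two
    (by linarith [le_max_left a b, le_max_right a b])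

lemma two_rpow_one_add_half_add_le (a b : ℝ) :
    (2 : ℝ) ^ (1 + (a + b) / 2) ≤ (2 : ℝ) ^ a + (2 : ℝ) ^ b := by
  have hsq (t : ℝ) : (2 : ℝ) ^ t = ((2 : ℝ) ^ (t / 2)) ^ 2 := by
    rw [← Real.rpow_natCast, ← Real.rpow_mul zero_le_two]; norm_num
  rw [Real.rpow_add two_pos, Real.rpow_one, add_div, Real.rpow_add two_pos, hsq a, hsq b]
  nlinarith [sq_nonneg ((2 : ℝ) ^ (a / 2) - (2 : ℝ) ^ (b / 2))]

def succLevels (σ : Finset ℕ) : Finset ℕ := σ.map (addRightEmbedding 1)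

noncomputable def nthSmallest (σ : Finset ℕ) (k : ℕ) : ℕ := σ.sort.getD k 0

@[simp] lemma card_succLevels (σ : Finset ℕ) : #(succLevels σ) = #σ := card_map _

lemma zero_notMem_succLevels (σ : Finset ℕ) : 0 ∉ succLevels σ := by simp [succLevels]

lemma succLevels_injective : Function.Injective succLevels := map_injective _

@[simp] lemma card_insert_zero_succLevels (σ : Finset ℕ) :
    #(insert 0 (succLevels σ)) = #σ + 1 := by
  rw [card_insert_of_notMem (zero_notMem_succLevels σ), card_succLevels]

lemma insert_zero_succLevels_injective :
    Function.Injective fun σ : Finset ℕ => insert 0 (succLevels σ) := fun σ τ h => by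
  have := congrArg (erase · 0) h
  simp only [erase_insert (zero_notMem_succLevels _)] at this
  exact succLevels_injective this

lemma nthSmallest_succLevels {σ : Finset ℕ} {k : ℕ} (hk : k < #σ) :
    nthSmallest (succLevels σ) k = nthSmallest σ k + 1 := by
  rw [nthSmallest, succLevels,
    ← StrictMonoOn.map_finsetSort _ _ (add_left_strictMono.strictMonoOn _),
    List.getD_eq_getElem _ _ (by simpa using hk), List.getElem_map, nthSmallest,
    List.getD_eq_getElem _ _ (by simpa using hk)]
  rfl

lemma nthSmallest_insert_zero_succLevels_zero (σ : Finset ℕ) :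
    nthSmallest (insert 0 (succLevels σ)) 0 = 0 := by
  rw [nthSmallest, sort_insert _ (fun _ _ => Nat.zero_le _) (zero_notMem_succLevels σ),
    List.getD_cons_zero]

lemma nthSmallest_insert_zero_succLevels_succ {σ : Finset ℕ} {k : ℕ} (hk : k < #σ) :
    nthSmallest (insert 0 (succLevels σ)) (k + 1) = nthSmallest σ k + 1 := by
  rw [nthSmallest, sort_insert _ (fun _ _ => Nat.zero_le _) (zero_notMem_succLevels σ),
    List.getD_cons_succ, ← nthSmallest, nthSmallest_succLevels hk]

/-- `HasReplica H σ`: `H` contains a replica of `T_{#σ}` occupying exactly the levels in `σ`.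
A replica either lies below one child of the root, or uses the root and consists of two
replicas with the same signature below its two children. -/
inductive HasReplica : Set (List Bool) → Finset ℕ → Prop
  | empty (H : Set (List Bool)) : HasReplica H ∅
  | ofBranch {H : Set (List Bool)} {σ : Finset ℕ} (c : Bool) :
      HasReplica (branch c H) σ → HasReplica H (succLevels σ)
  | ofRoot {H : Set (List Bool)} {σ : Finset ℕ} : [] ∈ H →
      HasReplica (branch false H) σ → HasReplica (branch true H) σ →
      HasReplica H (insert 0 (succLevels σ))

def graft (f₀ f₁ : List Bool → List Bool) : List Bool → List Bool
  | [] => []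
  | false :: x => false :: f₀ x
  | true :: x => true :: f₁ x

lemma HasReplica.exists_embedding {H : Set (List Bool)} {σ : Finset ℕ} (h : HasReplica H σ) :
    ∃ f : List Bool → List Bool,
      (∀ x : List Bool, x.length < #σ → f x ∈ H ∧ (f x).length = nthSmallest σ x.length) ∧
      ∀ x : List Bool, x.length + 1 < #σ →
        ∃ c : Bool, f x ++ [c] <+: f (x ++ [false]) ∧ f x ++ [!c] <+: f (x ++ [true]) := by
  induction h with
  | empty H => exact ⟨id, by simp, by simp⟩
  | @ofBranch H σ c _ ih =>
    obtain ⟨f, hf, hsplit⟩ := ih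
    refine ⟨(c :: f ·), fun x hx => ?_, fun x hx => ?_⟩
    · rw [card_succLevels] at hx
      exact ⟨(hf x hx).1, by simp [nthSmallest_succLevels hx, (hf x hx).2]⟩
    · rw [card_succLevels] at hx
      obtain ⟨b, h₀, h₁⟩ := hsplit x hx
      exact ⟨b, List.cons_prefix_cons.mpr ⟨rfl, h₀⟩, List.cons_prefix_cons.mpr ⟨rfl, h₁⟩⟩
  | @ofRoot H σ hroot _ _ ih₀ ih₁ =>
    obtain ⟨f₀, hf₀, hsplit₀⟩ := ih₀
    obtain ⟨f₁, hf₁, hsplit₁⟩ := ih₁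
    refine ⟨graft f₀ f₁, fun x hx => ?_, fun x hx => ?_⟩
    · rcases x with _ | ⟨_ | _, y⟩
      · exact ⟨hroot, by simp [graft, nthSmallest_insert_zero_succLevels_zero]⟩
      all_goals
        simp only [card_insert_zero_succLevels, List.length_cons, add_lt_add_iff_right] at hx
        simp only [graft, List.length_cons, nthSmallest_insert_zero_succLevels_succ hx,
          add_left_inj]
      exacts [hf₀ y hx, hf₁ y hx]
    · rcases x with _ | ⟨_ | _, y⟩
      · exact ⟨false, ⟨f₀ [], rfl⟩, ⟨f₁ [], rfl⟩⟩
      all_goals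
        simp only [card_insert_zero_succLevels, List.length_cons, add_lt_add_iff_right] at hx
      · obtain ⟨b, h₀, h₁⟩ := hsplit₀ y hx
        exact ⟨b, List.cons_prefix_cons.mpr ⟨rfl, h₀⟩, List.cons_prefix_cons.mpr ⟨rfl, h₁⟩⟩
      · obtain ⟨b, h₀, h₁⟩ := hsplit₁ y hx
        exact ⟨b, List.cons_prefix_cons.mpr ⟨rfl, h₀⟩, List.cons_prefix_cons.mpr ⟨rfl, h₁⟩⟩

lemma HasReplica.exists_regEmb {H : Set (List Bool)} {σ : Finset ℕ} {d : ℕ}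
    (h : HasReplica H σ) (hd : d ≤ #σ) :
    ∃ f : List Bool → List Bool, IsRegEmb d f ∧ ∀ x : List Bool, x.length < d → f x ∈ H := by
  obtain ⟨f, hf, hsplit⟩ := h.exists_embedding
  refine ⟨f, ⟨fun x y hx hy hxy => ?_, fun x hx => hsplit x (by omega)⟩,
    fun x hx => (hf x (by omega)).1⟩
  rw [(hf x (by omega)).2, (hf y (by omega)).2, hxy]

section Signatures

open Classical in
noncomputable def replicaSigs (n : ℕ) (H : Set (List Bool)) : Finset (Finset ℕ) :=
  (range n).powerset.filter (HasReplica H)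

variable {n : ℕ} {H : Set (List Bool)} {σ : Finset ℕ}

lemma mem_replicaSigs : σ ∈ replicaSigs n H ↔ σ ⊆ range n ∧ HasReplica H σ := by
  simp [replicaSigs]

lemma succLevels_subset_range (h : σ ⊆ range n) : succLevels σ ⊆ range (n + 1) := by
  intro l hl
  obtain ⟨k, hk, rfl⟩ := mem_map.mp hl
  simpa using h hk

lemma succLevels_mem_replicaSigs (c : Bool) (h : σ ∈ replicaSigs n (branch c H)) :
    succLevels σ ∈ replicaSigs (n + 1) H := by
  rw [mem_replicaSigs] at h ⊢
  exact ⟨succLevels_subset_range h.1, .ofBranch c h.2⟩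

lemma insert_zero_succLevels_mem_replicaSigs (hroot : [] ∈ H)
    (h₀ : σ ∈ replicaSigs n (branch false H)) (h₁ : σ ∈ replicaSigs n (branch true H)) :
    insert 0 (succLevels σ) ∈ replicaSigs (n + 1) H := by
  rw [mem_replicaSigs] at h₀ h₁ ⊢
  exact ⟨insert_subset (by simp) (succLevels_subset_range h₀.1), .ofRoot hroot h₀.2 h₁.2⟩

lemma card_replicaSigs_branch_le (c : Bool) :
    #(replicaSigs n (branch c H)) ≤ #(replicaSigs (n + 1) H) :=
  card_le_card_of_injOn succLevels (fun _ hσ => succLevels_mem_replicaSigs c hσ)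
    succLevels_injective.injOn

lemma card_replicaSigs_branch_add_le (hroot : [] ∈ H) :
    #(replicaSigs n (branch false H)) + #(replicaSigs n (branch true H)) ≤
      #(replicaSigs (n + 1) H) := by
  set A := replicaSigs n (branch false H)
  set B := replicaSigs n (branch true H)
  have hdisj : Disjoint ((A ∪ B).image succLevels)
      ((A ∩ B).image fun σ => insert 0 (succLevels σ)) := by
    simp only [disjoint_left, mem_image, not_exists, not_and]
    rintro _ ⟨σ, -, rfl⟩ τ - h
    exact zero_notMem_succLevels σ (h ▸ mem_insert_self 0 _)
  calc #A + #B = #(A ∪ B) + #(A ∩ B) := (card_union_add_card_inter A B).symm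
    _ = #((A ∪ B).image succLevels ∪ (A ∩ B).image fun σ => insert 0 (succLevels σ)) := by
      rw [card_union_of_disjoint hdisj, card_image_of_injective _ succLevels_injective,
        card_image_of_injective _ insert_zero_succLevels_injective]
    _ ≤ #(replicaSigs (n + 1) H) := by
      refine card_le_card (union_subset ?_ ?_) <;> intro τ hτ <;>
        obtain ⟨σ, hσ, rfl⟩ := mem_image.mp hτ
      · rcases mem_union.mp hσ with hσ | hσ
        exacts [succLevels_mem_replicaSigs false hσ, succLevels_mem_replicaSigs true hσ]
      · exact insert_zero_succLevels_mem_replicaSigs hroot (mem_inter.mp hσ).1 (mem_inter.mp hσ).2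

end Signatures

theorem two_rpow_weight_le_card_replicaSigs {n : ℕ} {H : Set (List Bool)}
    (hH : H ⊆ treeVerts n) : (2 : ℝ) ^ weight H ≤ #(replicaSigs n H) := by
  induction n generalizing H with
  | zero =>
    obtain rfl : H = ∅ := Set.subset_empty_iff.mp fun x hx => by simpa [treeVerts] using hH hx
    have hempty : ∅ ∈ replicaSigs 0 ∅ := mem_replicaSigs.mpr ⟨empty_subset _, .empty ∅⟩
    simpa [weight] using card_pos.mpr ⟨∅, hempty⟩
  | succ n ih =>
    have hfin : H.Finite := (treeVerts_finite (n + 1)).subset hH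
    have ih₀ := ih (branch_subset_treeVerts hH false)
    have ih₁ := ih (branch_subset_treeVerts hH true)
    by_cases hroot : [] ∈ H
    · calc (2 : ℝ) ^ weight H
          = 2 ^ (1 + (weight (branch false H) + weight (branch true H)) / 2) := by
            rw [weight_eq_one_add_branch hfin hroot]
        _ ≤ 2 ^ weight (branch false H) + 2 ^ weight (branch true H) :=
            two_rpow_one_add_half_add_le _ _
        _ ≤ #(replicaSigs n (branch false H)) + #(replicaSigs n (branch true H)) :=
            add_le_add ih₀ ih₁
        _ ≤ #(replicaSigs (n + 1) H) := by exact_mod_cast card_replicaSigs_branch_add_le hroot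
    · calc (2 : ℝ) ^ weight H = 2 ^ ((weight (branch false H) + weight (branch true H)) / 2) := by
            rw [weight_eq_branch hfin hroot]
        _ ≤ max (2 ^ weight (branch false H)) (2 ^ weight (branch true H)) :=
            two_rpow_half_add_le_max _ _
        _ ≤ max (#(replicaSigs n (branch false H)) : ℝ) #(replicaSigs n (branch true H)) :=
            max_le_max ih₀ ih₁
        _ ≤ #(replicaSigs (n + 1) H) := by
            exact_mod_cast
              max_le (card_replicaSigs_branch_le false) (card_replicaSigs_branch_le true)

lemma card_filter_powerset_card_lt {α : Type*} (s : Finset α) (d : ℕ) :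
    #(s.powerset.filter (#· < d)) = ∑ i ∈ range d, (#s).choose i := by
  rw [card_eq_sum_card_fiberwise (f := card) (t := range d)
    fun σ hσ => by simpa using (mem_filter.mp hσ).2]
  refine sum_congr rfl fun i hi => ?_
  rw [filter_filter, ← card_powersetCard, powersetCard_eq_filter]
  congr 1
  exact filter_congr fun σ _ => by simp only [mem_range] at hi; constructor <;> intro h <;> omega

lemma card_replicaSigs_le_sum_choose {n d : ℕ} {H : Set (List Bool)}
    (hsmall : ∀ σ ∈ replicaSigs n H, #σ < d) :
    #(replicaSigs n H) ≤ ∑ i ∈ range d, n.choose i := by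
  calc #(replicaSigs n H) ≤ #((range n).powerset.filter (#· < d)) := card_le_card fun σ hσ =>
        mem_filter.mpr ⟨mem_powerset.mpr (mem_replicaSigs.mp hσ).1, hsmall σ hσ⟩
    _ = ∑ i ∈ range d, n.choose i := by rw [card_filter_powerset_card_lt, card_range]

theorem stmt4_general (d n : ℕ)
    (H : Set (List Bool)) (hH : H ⊆ treeVerts n)
    (h : ∑ i ∈ Finset.range d, (n.choose i : ℝ) < (2 : ℝ) ^ weight H) :
    ∃ f : List Bool → List Bool, IsRegEmb d f ∧
      ∀ x : List Bool, x.length < d → f x ∈ H := by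
  obtain ⟨σ, hσ, hdσ⟩ : ∃ σ ∈ replicaSigs n H, d ≤ #σ := by
    by_contra! hsmall
    have hcard : (#(replicaSigs n H) : ℝ) ≤ ∑ i ∈ range d, (n.choose i : ℝ) :=
      mod_cast card_replicaSigs_le_sum_choose hsmall
    linarith [two_rpow_weight_le_card_replicaSigs hH]
  exact (mem_replicaSigs.mp hσ).2.exists_regEmb hdσ

/-- If `2^(w(H)) > Σ_{i=0}^{d-1} C(n,i)` then `H ⊆ V(T_n)` contains a replica
of `T_d`, i.e. there is a regular embedding of `T_d` into `H`. -/
theorem stmt4 (d n : ℕ) (hd : 0 < d) (hn : 0 < n)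
    (H : Set (List Bool)) (hH : H ⊆ treeVerts n)
    (h : ∑ i ∈ Finset.range d, (n.choose i : ℝ) < (2 : ℝ) ^ weight H) :
    ∃ f : List Bool → List Bool, IsRegEmb d f ∧
      ∀ x : List Bool, x.length < d → f x ∈ H :=
  stmt4_general d n H hH h
end

section
/- Let H ⊆ V(T_n), let r be the root of T_n, and let H', H'' be the intersections of H with the two subtrees T', T'' of T_n − r (each isomorphic to T_{n−1}), with signatures computed within T' and T'' respectively (levels shifted so the roots of T', T'' are at level 0). If r ∈ H, then S(H) is the disjoint union of S(H') ∪ S(H'') and {σ ∪ {0} : σ ∈ S(H') ∩ S(H'')} (after shifting all signature levels up by 1), and hence |S(H)| = |S(H')| + |S(H'')|. -/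
def signature (d : ℕ) (f : List Bool → List Bool) : Set ℕ :=
  {l | ∃ x : List Bool, x.length < d ∧ (f x).length = l}

lemma mem_sigs {H : Set (List Bool)} {σ : Set ℕ} :
    σ ∈ sigs H ↔ ∃ (d : ℕ) (f : List Bool → List Bool), IsRegEmb d f ∧
      (∀ x : List Bool, x.length < d → f x ∈ H) ∧ σ = signature d f :=
  Iff.rfl

lemma List.eq_cons_tail_of_singleton_prefix {α : Type*} {c : α} {l : List α} (h : [c] <+: l) :
    l = c :: l.tail := by
  obtain ⟨u, rfl⟩ := h
  rfl

def levelAt (f : List Bool → List Bool) (k : ℕ) : ℕ :=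
  (f (List.replicate k false)).length

section Signature

variable {d : ℕ} {f g : List Bool → List Bool}

lemma signature_congr (h : ∀ x : List Bool, x.length < d → (f x).length = (g x).length) :
    signature d f = signature d g := by
  ext l
  constructor <;> rintro ⟨x, hx, rfl⟩ <;> exact ⟨x, hx, by rw [h x hx]⟩

lemma signature_of_eq_cons {b : Bool} (hfg : ∀ x : List Bool, x.length < d → f x = b :: g x) :
    signature d f = (· + 1) '' signature d g := by
  ext l
  constructor
  · rintro ⟨x, hx, rfl⟩
    exact ⟨_, ⟨x, hx, rfl⟩, by rw [hfg x hx, List.length_cons]⟩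
  · rintro ⟨_, ⟨x, hx, rfl⟩, rfl⟩
    exact ⟨x, hx, by rw [hfg x hx, List.length_cons]⟩

lemma signature_succ (d : ℕ) (f : List Bool → List Bool) :
    signature (d + 1) f = insert (f []).length
      (signature d (fun x => f (false :: x)) ∪ signature d (fun x => f (true :: x))) := by
  ext l
  constructor
  · rintro ⟨_ | ⟨b, x⟩, hx, rfl⟩
    · exact Or.inl rfl
    · simp only [List.length_cons, Nat.add_lt_add_iff_right] at hx
      cases b
      exacts [Or.inr (Or.inl ⟨x, hx, rfl⟩), Or.inr (Or.inr ⟨x, hx, rfl⟩)]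
  · rintro (rfl | ⟨x, hx, rfl⟩ | ⟨x, hx, rfl⟩)
    · exact ⟨[], Nat.succ_pos d, rfl⟩
    all_goals exact ⟨_ :: x, Nat.succ_lt_succ hx, rfl⟩

end Signature

namespace IsRegEmb

variable {d : ℕ} {f : List Bool → List Bool}

lemma prefix_append (hf : IsRegEmb d f) (x : List Bool) {z : List Bool}
    (h : (x ++ z).length < d) : f x <+: f (x ++ z) := by
  induction z using List.reverseRecOn with
  | nil => simp
  | append_singleton z b ih =>
    rw [← List.append_assoc] at h ⊢
    have hz : (x ++ z).length + 1 < d := by simp only [List.length_append] at h ⊢; omega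
    obtain ⟨c, hc₀, hc₁⟩ := hf.2 (x ++ z) hz
    refine (ih (by omega)).trans ?_
    cases b
    exacts [(List.prefix_append _ [c]).trans hc₀, (List.prefix_append _ [!c]).trans hc₁]

lemma eq_cons_tail_of_root_eq_cons (hf : IsRegEmb d f) {b : Bool} {t : List Bool}
    (hroot : f [] = b :: t) {x : List Bool} (hx : x.length < d) : f x = b :: (f x).tail := by
  have h := hf.prefix_append [] (z := x) hx
  rw [hroot] at h
  exact List.eq_cons_tail_of_singleton_prefix ((List.prefix_append [b] t).trans h)

lemma exists_heads_of_root_eq_nil (hf : IsRegEmb (d + 1) f) (hroot : f [] = []) :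
    ∃ c : Bool, ∀ x : List Bool, x.length < d →
      f (false :: x) = c :: (f (false :: x)).tail ∧
      f (true :: x) = (!c) :: (f (true :: x)).tail := by
  rcases Nat.eq_zero_or_pos d with rfl | hd
  · exact ⟨false, fun x hx => (Nat.not_lt_zero _ hx).elim⟩
  obtain ⟨c, hc₀, hc₁⟩ := hf.2 [] (by simpa using hd)
  rw [hroot, List.nil_append] at hc₀ hc₁
  refine ⟨c, fun x hx => ⟨?_, ?_⟩⟩ <;> apply List.eq_cons_tail_of_singleton_prefix
  · exact hc₀.trans (hf.prefix_append [false] (by simpa using hx))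
  · exact hc₁.trans (hf.prefix_append [true] (by simpa using hx))

lemma length_eq_levelAt (hf : IsRegEmb d f) {x : List Bool} (hx : x.length < d) :
    (f x).length = levelAt f x.length :=
  hf.1 x _ hx (by simpa using hx) (by simp)

lemma strictMonoOn_levelAt (hf : IsRegEmb d f) : StrictMonoOn (levelAt f) (Set.Iio d) := by
  refine strictMonoOn_of_lt_succ Set.ordConnected_Iio fun k _ _ hk => ?_
  rw [Order.succ_eq_add_one, Set.mem_Iio] at hk
  rw [Order.succ_eq_add_one]
  obtain ⟨c, hc, -⟩ := hf.2 (List.replicate k false) (by simpa using hk)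
  have := hc.length_le
  simp only [List.length_append, List.length_singleton] at this
  rwa [levelAt, levelAt, List.replicate_succ']

lemma signature_eq_range (hf : IsRegEmb d f) :
    signature d f = Set.range fun k : Fin d => levelAt f k := by
  ext l
  constructor
  · rintro ⟨x, hx, rfl⟩
    exact ⟨⟨x.length, hx⟩, (hf.length_eq_levelAt hx).symm⟩
  · rintro ⟨k, rfl⟩
    exact ⟨List.replicate k false, by simp, rfl⟩

lemma levelAt_eq_of_signature_eq {d₀ d₁ : ℕ} {f₀ f₁ : List Bool → List Bool}
    (h₀ : IsRegEmb d₀ f₀) (h₁ : IsRegEmb d₁ f₁) (hσ : signature d₀ f₀ = signature d₁ f₁) :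
    d₀ = d₁ ∧ ∀ k < d₀, levelAt f₀ k = levelAt f₁ k := by
  have hmono : ∀ {d f}, IsRegEmb d f → StrictMono fun k : Fin d => levelAt f k :=
    fun hf _ _ hij => hf.strictMonoOn_levelAt (Fin.is_lt _) (Fin.is_lt _) hij
  have hcard : ∀ {d f}, IsRegEmb d f → (signature d f).ncard = d := fun hf => by
    rw [hf.signature_eq_range, Set.ncard_range_of_injective (hmono hf).injective, Nat.card_fin]
  obtain rfl : d₀ = d₁ := by rw [← hcard h₀, ← hcard h₁, hσ]
  rw [h₀.signature_eq_range, h₁.signature_eq_range, (hmono h₀).range_inj (hmono h₁)] at hσ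
  exact ⟨rfl, fun k hk => congrFun hσ ⟨k, hk⟩⟩

lemma comp_cons (hf : IsRegEmb (d + 1) f) (b : Bool) : IsRegEmb d fun x => f (b :: x) :=
  ⟨fun x y hx hy hxy => hf.1 _ _ (by simpa using hx) (by simpa using hy) (by simpa using hxy),
    fun x hx => hf.2 (b :: x) (by simpa using hx)⟩

lemma signature_comp_cons_false (hf : IsRegEmb (d + 1) f) :
    signature d (fun x => f (false :: x)) = signature d (fun x => f (true :: x)) :=
  signature_congr fun x hx => hf.1 _ _ (by simpa using hx) (by simpa using hx) rfl

end IsRegEmb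

lemma isRegEmb_iff_of_eq_cons {d : ℕ} {f g : List Bool → List Bool} {b : Bool}
    (hfg : ∀ x : List Bool, x.length < d → f x = b :: g x) : IsRegEmb d f ↔ IsRegEmb d g := by
  refine and_congr ?_ (forall_congr' fun x => imp_congr_right fun hx => ?_)
  · refine forall₂_congr fun x y => imp_congr_right fun hx => imp_congr_right fun hy => ?_
    rw [hfg x hx, hfg y hy]
    simp
  · rw [hfg x (by omega), hfg _ (by simpa using hx), hfg _ (by simpa using hx)]
    simp [List.cons_prefix_cons]

lemma injective_image_succ : Function.Injective fun σ : Set ℕ => (· + 1) '' σ :=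
  Set.image_injective.2 (add_left_injective 1)

lemma injective_insert_zero_image_succ :
    Function.Injective fun σ : Set ℕ => insert 0 ((· + 1) '' σ) := fun s t h => by
  ext x
  simpa using congrArg (x + 1 ∈ ·) h

section Sigs

variable {H : Set (List Bool)} {σ : Set ℕ}

lemma image_succ_mem_sigs (b : Bool) (hσ : σ ∈ sigs {t | b :: t ∈ H}) :
    (· + 1) '' σ ∈ sigs H := by
  obtain ⟨d, g, hg, hH, rfl⟩ := hσ
  have hfg : ∀ x : List Bool, x.length < d → b :: g x = b :: g x := fun _ _ => rfl
  exact ⟨d, fun x => b :: g x, (isRegEmb_iff_of_eq_cons hfg).2 hg, hH,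
    (signature_of_eq_cons hfg).symm⟩

lemma exists_mem_sigs_of_eq_cons {d : ℕ} {f : List Bool → List Bool} {b : Bool}
    (hf : IsRegEmb d f) (hH : ∀ x : List Bool, x.length < d → f x ∈ H)
    (hb : ∀ x : List Bool, x.length < d → f x = b :: (f x).tail) :
    ∃ τ ∈ sigs {t | b :: t ∈ H}, signature d f = (· + 1) '' τ :=
  ⟨_, ⟨d, _, (isRegEmb_iff_of_eq_cons hb).1 hf, fun x hx => by
      simpa only [Set.mem_ofPred_eq, ← hb x hx] using hH x hx, rfl⟩,
    signature_of_eq_cons hb⟩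

def glue (f₀ f₁ : List Bool → List Bool) : List Bool → List Bool
  | [] => []
  | false :: y => false :: f₀ y
  | true :: y => true :: f₁ y

lemma signature_glue (d : ℕ) (f₀ f₁ : List Bool → List Bool) :
    signature (d + 1) (glue f₀ f₁) = insert 0 ((· + 1) '' (signature d f₀ ∪ signature d f₁)) := by
  have h₀ : signature d (fun x => glue f₀ f₁ (false :: x)) = (· + 1) '' signature d f₀ :=
    signature_of_eq_cons fun _ _ => rfl
  have h₁ : signature d (fun x => glue f₀ f₁ (true :: x)) = (· + 1) '' signature d f₁ :=
    signature_of_eq_cons fun _ _ => rfl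
  rw [signature_succ, Set.image_union, h₀, h₁]
  rfl

lemma isRegEmb_glue {d : ℕ} {f₀ f₁ : List Bool → List Bool} (h₀ : IsRegEmb d f₀)
    (h₁ : IsRegEmb d f₁) (hlev : ∀ k < d, levelAt f₀ k = levelAt f₁ k) :
    IsRegEmb (d + 1) (glue f₀ f₁) := by
  have hlength : ∀ (b : Bool) (z : List Bool), z.length < d →
      (glue f₀ f₁ (b :: z)).length = levelAt f₀ z.length + 1 := by
    rintro (_ | _) z hz
    · simp [glue, h₀.length_eq_levelAt hz]
    · simp [glue, h₁.length_eq_levelAt hz, hlev _ hz]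
  have hsub : ∀ b : Bool, IsRegEmb d fun y => glue f₀ f₁ (b :: y) := by
    rintro (_ | _)
    exacts [(isRegEmb_iff_of_eq_cons fun _ _ => rfl).2 h₀,
      (isRegEmb_iff_of_eq_cons fun _ _ => rfl).2 h₁]
  refine ⟨?_, ?_⟩
  · rintro (_ | ⟨b, x⟩) (_ | ⟨b', y⟩) hx hy hxy
    · rfl
    all_goals simp only [List.length_cons, List.length_nil] at hx hy hxy
    · omega
    · omega
    · rw [hlength b x (by omega), hlength b' y (by omega), Nat.succ_injective hxy]
  · rintro (_ | ⟨b, y⟩) hx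
    · exact ⟨false, by simp [glue], by simp [glue]⟩
    · exact (hsub b).2 y (by simpa using hx)

lemma insert_zero_image_succ_mem_sigs (hr : ([] : List Bool) ∈ H)
    (h₀ : σ ∈ sigs {t | false :: t ∈ H}) (h₁ : σ ∈ sigs {t | true :: t ∈ H}) :
    insert 0 ((· + 1) '' σ) ∈ sigs H := by
  obtain ⟨d, f₀, hf₀, hH₀, rfl⟩ := mem_sigs.1 h₀
  obtain ⟨d₁, f₁, hf₁, hH₁, hσ⟩ := mem_sigs.1 h₁
  obtain ⟨rfl, hlev⟩ := hf₀.levelAt_eq_of_signature_eq hf₁ hσ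
  refine ⟨d + 1, glue f₀ f₁, isRegEmb_glue hf₀ hf₁ hlev, ?_, ?_⟩
  · rintro (_ | ⟨_ | _, y⟩) hx
    exacts [hr, hH₀ y (by simpa using hx), hH₁ y (by simpa using hx)]
  · show _ = signature (d + 1) (glue f₀ f₁)
    rw [signature_glue, ← hσ, Set.union_self]

lemma mem_sigs_cases (hσ : σ ∈ sigs H) :
    (∃ b : Bool, ∃ τ ∈ sigs {t | b :: t ∈ H}, σ = (· + 1) '' τ) ∨
      ∃ τ ∈ sigs {t | false :: t ∈ H} ∩ sigs {t | true :: t ∈ H},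
        σ = insert 0 ((· + 1) '' τ) := by
  obtain ⟨_ | d, f, hf, hH, rfl⟩ := mem_sigs.1 hσ
  · exact Or.inl ⟨false, exists_mem_sigs_of_eq_cons hf hH fun x hx => (Nat.not_lt_zero _ hx).elim⟩
  rcases hroot : f [] with _ | ⟨b, t⟩
  · obtain ⟨c, hc⟩ := hf.exists_heads_of_root_eq_nil hroot
    obtain ⟨τ, hτ, hfτ⟩ := exists_mem_sigs_of_eq_cons (hf.comp_cons false)
      (fun x hx => hH _ (by simpa using hx)) fun x hx => (hc x hx).1
    obtain ⟨τ', hτ', htτ'⟩ := exists_mem_sigs_of_eq_cons (hf.comp_cons true)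
      (fun x hx => hH _ (by simpa using hx)) fun x hx => (hc x hx).2
    obtain rfl : τ = τ' :=
      injective_image_succ (hfτ.symm.trans (hf.signature_comp_cons_false.trans htτ'))
    refine Or.inr ⟨τ, ?_, ?_⟩
    · cases c
      exacts [⟨hτ, hτ'⟩, ⟨hτ', hτ⟩]
    · rw [signature_succ, hroot, ← hf.signature_comp_cons_false, Set.union_self, hfτ]
      rfl
  · exact Or.inl ⟨b, exists_mem_sigs_of_eq_cons hf hH fun x hx =>
      hf.eq_cons_tail_of_root_eq_cons hroot hx⟩

lemma sigs_of_nil_mem (hr : ([] : List Bool) ∈ H) :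
    sigs H =
      ((fun σ : Set ℕ => (· + 1) '' σ) ''
          (sigs {t | false :: t ∈ H} ∪ sigs {t | true :: t ∈ H})) ∪
      ((fun σ : Set ℕ => insert 0 ((· + 1) '' σ)) ''
          (sigs {t | false :: t ∈ H} ∩ sigs {t | true :: t ∈ H})) := by
  ext σ
  constructor
  · intro hσ
    rcases mem_sigs_cases hσ with ⟨b, τ, hτ, rfl⟩ | ⟨τ, hτ, rfl⟩
    · cases b
      exacts [Or.inl ⟨τ, Or.inl hτ, rfl⟩, Or.inl ⟨τ, Or.inr hτ, rfl⟩]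
    · exact Or.inr ⟨τ, hτ, rfl⟩
  · rintro (⟨τ, hτ | hτ, rfl⟩ | ⟨τ, ⟨hτ₀, hτ₁⟩, rfl⟩)
    exacts [image_succ_mem_sigs false hτ, image_succ_mem_sigs true hτ,
      insert_zero_image_succ_mem_sigs hr hτ₀ hτ₁]

lemma sigs_finite {n : ℕ} (hH : H ⊆ treeVerts n) : (sigs H).Finite := by
  refine (Set.finite_Iio n).finite_subsets.subset ?_
  rintro σ ⟨d, f, -, hmem, rfl⟩ l ⟨x, hx, rfl⟩
  exact hH (hmem x hx)

end Sigs

lemma disjoint_image_succ_insert_zero (A B : Set (Set ℕ)) :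
    Disjoint ((fun σ : Set ℕ => (· + 1) '' σ) '' A)
      ((fun σ : Set ℕ => insert 0 ((· + 1) '' σ)) '' B) := by
  rw [Set.disjoint_left]
  rintro _ ⟨τ, -, rfl⟩ ⟨τ', -, h⟩
  simp only at h
  obtain ⟨m, -, hm⟩ : 0 ∈ (· + 1) '' τ := by rw [← h]; exact Set.mem_insert 0 _
  exact Nat.succ_ne_zero m hm

/-- If the root `r = []` belongs to `H ⊆ V(T_n)`, then, writing `H'`, `H''`
for the parts of `H` in the two subtrees of `T_n - r` (with levels shifted so
their roots are at level 0), `S(H)` is the disjoint union of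
`S(H') ∪ S(H'')` and `{σ ∪ {0} : σ ∈ S(H') ∩ S(H'')}` (all signature levels
shifted up by 1), and hence `|S(H)| = |S(H')| + |S(H'')|`. -/
theorem stmt14 (n : ℕ) (H : Set (List Bool)) (hH : H ⊆ treeVerts n)
    (hr : ([] : List Bool) ∈ H) :
    sigs H =
      ((fun σ : Set ℕ => (· + 1) '' σ) ''
          (sigs {t | false :: t ∈ H} ∪ sigs {t | true :: t ∈ H})) ∪
      ((fun σ : Set ℕ => insert 0 ((· + 1) '' σ)) ''
          (sigs {t | false :: t ∈ H} ∩ sigs {t | true :: t ∈ H})) ∧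
    Disjoint
      ((fun σ : Set ℕ => (· + 1) '' σ) ''
          (sigs {t | false :: t ∈ H} ∪ sigs {t | true :: t ∈ H}))
      ((fun σ : Set ℕ => insert 0 ((· + 1) '' σ)) ''
          (sigs {t | false :: t ∈ H} ∩ sigs {t | true :: t ∈ H})) ∧
    (sigs H).ncard =
      (sigs {t | false :: t ∈ H}).ncard + (sigs {t | true :: t ∈ H}).ncard := by
  have hdisj := disjoint_image_succ_insert_zero
    (sigs {t | false :: t ∈ H} ∪ sigs {t | true :: t ∈ H})
    (sigs {t | false :: t ∈ H} ∩ sigs {t | true :: t ∈ H})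
  have hfin : ∀ b : Bool, (sigs {t | b :: t ∈ H}).Finite := fun b =>
    sigs_finite fun t ht => (Nat.lt_succ_self _).trans (hH ht)
  refine ⟨sigs_of_nil_mem hr, hdisj, ?_⟩
  rw [sigs_of_nil_mem hr, Set.ncard_union_eq hdisj (((hfin _).union (hfin _)).image _)
      (((hfin _).inter_of_left _).image _),
    Set.ncard_image_of_injective _ injective_image_succ,
    Set.ncard_image_of_injective _ injective_insert_zero_image_succ,
    Set.ncard_union_add_ncard_inter _ _ (hfin _) (hfin _)]
end
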